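/- For every α with 0<α<1/2 there exists a probabilistic finite state transducer that computes the relation R₄ = {(0^m 1^n a, 4^l) : a∈{2,3}, (a=2 → l=m) and (a=3 → l=n)} ⊆ {0,1,2,3}*×{4}* with isolated cutpoint α (so the cutpoint can be taken arbitrarily close to 1/2). -/

import Mathlib

/-!  Probabilistic finite state transducers (pfst), following
Freivalds & Winter, "Quantum Finite State Transducers". -/

section PFSTdefs

variable {Q Γ₁ Γ₂ : Type*}

/-- A probabilistic finite state transducer: a finite state set `Q`, input
alphabet `Γ₁` (with implicit begin/end markers `‡`,`$`), output alphabet `Γ₂`,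
row-stochastic transition matrices for every letter and for the two markers,
output functions, an initial state, and disjoint sets of accepting and
rejecting states.  The end-marker matrix carries all probability from
non-halting states into `acc ∪ rej`. -/
structure PFST (Q Γ₁ Γ₂ : Type*) [Fintype Q] [DecidableEq Q] where
  V : Γ₁ → Matrix Q Q ℝ
  Vbeg : Matrix Q Q ℝ
  Vend : Matrix Q Q ℝ
  out : Γ₁ → Q → List Γ₂
  outBeg : Q → List Γ₂
  outEnd : Q → List Γ₂
  init : Q
  acc : Finset Q
  rej : Finset Q
  acc_disj_rej : Disjoint acc rej
  nonneg : ∀ a q p, 0 ≤ V a q p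
  nonnegBeg : ∀ q p, 0 ≤ Vbeg q p
  nonnegEnd : ∀ q p, 0 ≤ Vend q p
  stochastic : ∀ a q, ∑ p, V a q p = 1
  stochasticBeg : ∀ q, ∑ p, Vbeg q p = 1
  stochasticEnd : ∀ q, ∑ p, Vend q p = 1
  endHalts : ∀ q, q ∉ acc → q ∉ rej → ∀ p, p ∉ acc → p ∉ rej → Vend q p = 0

variable [DecidableEq Γ₂]

/-- Probability that, starting from the (non-halting) state `q`, reading the
remaining list of computation steps (each step being a transition matrix
together with an output function), the machine eventually halts in an
accepting state having produced in total exactly the output word `w`.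
In each step, being in state `q`, the word `s.2 q` is appended to the output
tape and the state moves to `p` with probability `s.1 q p`; the computation
halts as soon as an accepting or rejecting state is entered. -/
def pAccAux (acc non : Finset Q) :
    List (Matrix Q Q ℝ × (Q → List Γ₂)) → Q → List Γ₂ → ℝ
  | [], _, _ => 0
  | s :: rest, q, w =>
      if s.2 q <+: w then
        (∑ p ∈ acc, s.1 q p) * (if w.drop (s.2 q).length = [] then 1 else 0)
          + ∑ p ∈ non, s.1 q p * pAccAux acc non rest p (w.drop (s.2 q).length)
      else 0

variable [Fintype Q] [DecidableEq Q]

/-- The list of computation steps on input `‡ v $`. -/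
def PFST.steps (T : PFST Q Γ₁ Γ₂) (v : List Γ₁) :
    List (Matrix Q Q ℝ × (Q → List Γ₂)) :=
  (T.Vbeg, T.outBeg) :: (v.map fun a => (T.V a, T.out a)) ++ [(T.Vend, T.outEnd)]

/-- `T.prob v w` : the probability that on input `‡ v $` the transducer halts
accepting, with exactly `w` written on the output tape. -/
def PFST.prob (T : PFST Q Γ₁ Γ₂) (v : List Γ₁) (w : List Γ₂) : ℝ :=
  pAccAux T.acc (Finset.univ \ (T.acc ∪ T.rej)) (T.steps v) T.init w

/-- `T` computes the relation `R` with probability `α`. -/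
def PFST.Computes (T : PFST Q Γ₁ Γ₂) (R : Set (List Γ₁ × List Γ₂)) (α : ℝ) : Prop :=
  ∀ v w, ((v, w) ∈ R → α ≤ T.prob v w) ∧ ((v, w) ∉ R → T.prob v w ≤ 1 - α)

/-- `T` computes the relation `R` with isolated cutpoint `α`. -/
def PFST.ComputesCutpoint (T : PFST Q Γ₁ Γ₂) (R : Set (List Γ₁ × List Γ₂)) (α : ℝ) : Prop :=
  ∃ ε > 0, ∀ v w, ((v, w) ∈ R → α + ε ≤ T.prob v w) ∧ ((v, w) ∉ R → T.prob v w ≤ α - ε)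

/-- A deterministic finite state transducer: all transition probabilities
are `0` or `1`. -/
def PFST.IsDeterministic (T : PFST Q Γ₁ Γ₂) : Prop :=
  (∀ a q p, T.V a q p = 0 ∨ T.V a q p = 1) ∧
  (∀ q p, T.Vbeg q p = 0 ∨ T.Vbeg q p = 1) ∧
  (∀ q p, T.Vend q p = 0 ∨ T.Vend q p = 1)

end PFSTdefs

/-- The relation
`R₄ = {(0^m 1^n a, 4^l) : a ∈ {2,3}, (a = 2 → l = m) ∧ (a = 3 → l = n)}`
`⊆ {0,1,2,3}* × {4}*` (the output symbol `4` being represented inside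
`Fin 5`). -/
def R₄ : Set (List (Fin 4) × List (Fin 5)) :=
  {p | ∃ (m n l : ℕ) (a : Fin 4), (a = 2 ∨ a = 3) ∧
    (a = 2 → l = m) ∧ (a = 3 → l = n) ∧
    p.1 = List.replicate m 0 ++ List.replicate n 1 ++ [a] ∧
    p.2 = List.replicate l 4}

namespace R4proof

/-- deterministic transition of the two branches, states in `Fin 9`:
`0`=start, `1,2,3` = branch A (counting `0`s), `4,5,6` = branch B, `7`=acc, `8`=rej. -/
def tδ (a : Fin 4) (q : Fin 9) : Fin 9 :=
  match a.val, q.val with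
  | 0, 1 => 1 | 0, 4 => 4
  | 1, 1 => 2 | 1, 2 => 2 | 1, 4 => 5 | 1, 5 => 5
  | 2, 1 => 3 | 2, 2 => 3
  | 3, 4 => 6 | 3, 5 => 6
  | _, _ => 8

def tout (a : Fin 4) (q : Fin 9) : List (Fin 5) :=
  match a.val, q.val with
  | 0, 1 => [4] | 1, 4 => [4] | 1, 5 => [4]
  | _, _ => []

example : tδ 0 1 = 1 := rfl
example : tδ 1 4 = 5 := by decide
example : tout 1 5 = [4] := rfl

def dAcc : List (Fin 4) → Fin 9 → List (Fin 5) → ℝ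
  | [], q, w => if (q = 3 ∨ q = 6) ∧ w = [] then 1 else 0
  | a :: v, q, w => if tout a q <+: w then dAcc v (tδ a q) (w.drop (tout a q).length) else 0

end R4proof
namespace R4proof

def tδend (q : Fin 9) : Fin 9 := if q = 3 ∨ q = 6 then 7 else 8

noncomputable def T4 : PFST (Fin 9) (Fin 4) (Fin 5) where
  V a := fun q p => if p = tδ a q then 1 else 0
  Vbeg := fun q p => if q = 0 then (if p = 1 ∨ p = 4 then 1/2 else 0)
    else if p = 8 then 1 else 0
  Vend := fun q p => if p = tδend q then 1 else 0
  out := tout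
  outBeg _ := []
  outEnd _ := []
  init := 0
  acc := {7}
  rej := {8}
  acc_disj_rej := by decide
  nonneg := by intro a q p; split <;> norm_num
  nonnegBeg := by
    intro q p
    split <;> split <;> norm_num
  nonnegEnd := by intro q p; split <;> norm_num
  stochastic := by intro a q; simp
  stochasticBeg := by
    intro q
    by_cases h : q = 0
    · simp only [h, if_pos, Fin.sum_univ_succ]
      norm_num [Fin.ext_iff]
    · simp [h]
  stochasticEnd := by intro q; simp
  endHalts := by
    intro q _ _ p hp7 hp8
    simp only [Finset.mem_singleton] at hp7 hp8
    rw [if_neg]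
    unfold tδend; split <;> simp_all

end R4proof
namespace R4proof

lemma tδ_ne7 (a : Fin 4) (q : Fin 9) : tδ a q ≠ 7 := by
  revert a q; decide

lemma dAcc_nil (q w) : dAcc [] q w = if (q = 3 ∨ q = 6) ∧ w = [] then 1 else 0 := rfl

lemma dAcc_cons (a v q w) : dAcc (a :: v) q w =
    if tout a q <+: w then dAcc v (tδ a q) (w.drop (tout a q).length) else 0 := rfl

lemma dAcc8 (v : List (Fin 4)) (w : List (Fin 5)) : dAcc v 8 w = 0 := by
  induction v generalizing w with
  | nil => simp [dAcc_nil]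
  | cons a v ih =>
    rw [dAcc_cons, show tδ a 8 = 8 from by revert a; decide,
      show tout a 8 = [] from by revert a; decide]
    simp [ih]

lemma dAcc_nonneg (v : List (Fin 4)) (q : Fin 9) (w : List (Fin 5)) : 0 ≤ dAcc v q w := by
  induction v generalizing q w with
  | nil => rw [dAcc_nil]; split <;> norm_num
  | cons a v ih =>
    rw [dAcc_cons]; split
    · exact ih _ _
    · exact le_rfl

lemma nonSet : (Finset.univ \ (T4.acc ∪ T4.rej) : Finset (Fin 9)) = {0,1,2,3,4,5,6} := by
  decide

lemma tδ_mem (a : Fin 4) (q : Fin 9) (h8 : tδ a q ≠ 8) :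
    tδ a q ∈ ({0,1,2,3,4,5,6} : Finset (Fin 9)) := by
  revert a q; decide

lemma detAux (v : List (Fin 4)) (q : Fin 9) (w : List (Fin 5)) :
    pAccAux T4.acc (Finset.univ \ (T4.acc ∪ T4.rej))
      ((v.map fun a => (T4.V a, T4.out a)) ++ [(T4.Vend, T4.outEnd)]) q w = dAcc v q w := by
  induction v generalizing q w with
  | nil =>
    rw [List.map_nil, List.nil_append, pAccAux, dAcc_nil]
    simp only [pAccAux, mul_zero, Finset.sum_const_zero, add_zero]
    have h1 : T4.outEnd q = [] := rfl
    have h2 : (∑ p ∈ T4.acc, T4.Vend q p) = if q = 3 ∨ q = 6 then (1:ℝ) else 0 := by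
      show (∑ p ∈ {7}, _) = _
      rw [Finset.sum_singleton]
      show (if (7:Fin 9) = tδend q then (1:ℝ) else 0) = _
      unfold tδend; split <;> simp_all
    simp only [h1, h2, List.nil_prefix, if_pos, List.length_nil, List.drop_zero]
    split_ifs <;> simp_all
  | cons a v ih =>
    rw [List.map_cons, List.cons_append, pAccAux, dAcc_cons]
    dsimp only
    have hout : T4.out a q = tout a q := rfl
    simp only [hout]
    split
    · have hacc : (∑ p ∈ T4.acc, T4.V a q p) = 0 := by
        show (∑ p ∈ {7}, _) = _
        rw [Finset.sum_singleton]
        show (if (7:Fin 9) = tδ a q then (1:ℝ) else 0) = 0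
        rw [if_neg (fun h => tδ_ne7 a q h.symm)]
      rw [hacc, zero_mul, zero_add]
      have hV : ∀ p, T4.V a q p = if p = tδ a q then (1:ℝ) else 0 := fun p => rfl
      simp only [hV, ite_mul, one_mul, zero_mul, Finset.sum_ite_eq']
      rw [nonSet] at ih ⊢
      by_cases h8 : tδ a q = 8
      · rw [if_neg (by rw [h8]; decide), h8, dAcc8]
      · rw [if_pos (tδ_mem a q h8), ih]
    · rfl

lemma prob_eq (v : List (Fin 4)) (w : List (Fin 5)) :
    T4.prob v w = 1/2 * dAcc v 1 w + 1/2 * dAcc v 4 w := by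
  have hstep : T4.prob v w = pAccAux T4.acc (Finset.univ \ (T4.acc ∪ T4.rej))
      ((T4.Vbeg, T4.outBeg) ::
        ((v.map fun a => (T4.V a, T4.out a)) ++ [(T4.Vend, T4.outEnd)])) T4.init w := rfl
  rw [hstep, pAccAux]
  dsimp only
  have h0 : T4.outBeg T4.init = [] := rfl
  simp only [h0]
  simp only [List.nil_prefix, if_pos, List.length_nil, List.drop_zero]
  have hVbeg : ∀ p, T4.Vbeg T4.init p = if p = 1 ∨ p = 4 then (1/2:ℝ) else 0 := by
    intro p
    show (if (0:Fin 9) = 0 then (if p = 1 ∨ p = 4 then (1/2:ℝ) else 0)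
      else if p = 8 then (1:ℝ) else 0) = _
    rw [if_pos rfl]
  have hz : ∀ p : Fin 9, ¬(p = 1 ∨ p = 4) → T4.Vbeg T4.init p = 0 := by
    intro p hp; rw [hVbeg, if_neg hp]
  have hh : ∀ p : Fin 9, (p = 1 ∨ p = 4) → T4.Vbeg T4.init p = 1/2 := by
    intro p hp; rw [hVbeg, if_pos hp]
  have hacc : (∑ p ∈ T4.acc, T4.Vbeg T4.init p) = 0 := by
    show (∑ p ∈ {7}, _) = _
    rw [Finset.sum_singleton, hz 7 (by decide)]
  rw [hacc, zero_mul, zero_add]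
  simp only [detAux]
  rw [nonSet,
    Finset.sum_insert (by decide), Finset.sum_insert (by decide),
    Finset.sum_insert (by decide), Finset.sum_insert (by decide),
    Finset.sum_insert (by decide), Finset.sum_insert (by decide),
    Finset.sum_singleton]
  rw [hz 0 (by decide), hz 2 (by decide), hz 3 (by decide), hz 5 (by decide),
    hz 6 (by decide), hh 1 (by decide), hh 4 (by decide)]
  ring

end R4proof
namespace R4proof

lemma accA2 (n : ℕ) : dAcc (List.replicate n 1 ++ [2]) 2 [] = 1 := by
  induction n with
  | zero => simp [dAcc_cons, dAcc_nil, show tδ 2 2 = 3 from rfl, show tout 2 2 = [] from rfl]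
  | succ n ih =>
    simpa [List.replicate_succ, dAcc_cons,
      show tδ 1 2 = 2 from rfl, show tout 1 2 = [] from rfl] using ih

lemma accA1 (n : ℕ) : dAcc (List.replicate n 1 ++ [2]) 1 [] = 1 := by
  cases n with
  | zero => simp [dAcc_cons, dAcc_nil, show tδ 2 1 = 3 from rfl, show tout 2 1 = [] from rfl]
  | succ n =>
    simpa [List.replicate_succ, dAcc_cons,
      show tδ 1 1 = 2 from rfl, show tout 1 1 = [] from rfl] using accA2 n

lemma accA (m n : ℕ) :
    dAcc (List.replicate m 0 ++ (List.replicate n 1 ++ [2])) 1 (List.replicate m 4) = 1 := by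
  induction m with
  | zero => simpa using accA1 n
  | succ m ih =>
    simpa [List.replicate_succ, dAcc_cons,
      show tδ 0 1 = 1 from rfl, show tout 0 1 = [4] from rfl,
      List.cons_prefix_cons] using ih

lemma accB5 (n : ℕ) : dAcc (List.replicate n 1 ++ [3]) 5 (List.replicate n 4) = 1 := by
  induction n with
  | zero => simp [dAcc_cons, dAcc_nil, show tδ 3 5 = 6 from rfl, show tout 3 5 = [] from rfl]
  | succ n ih =>
    simpa [List.replicate_succ, dAcc_cons,
      show tδ 1 5 = 5 from rfl, show tout 1 5 = [4] from rfl,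
      List.cons_prefix_cons] using ih

lemma accB4 (n : ℕ) : dAcc (List.replicate n 1 ++ [3]) 4 (List.replicate n 4) = 1 := by
  cases n with
  | zero => simp [dAcc_cons, dAcc_nil, show tδ 3 4 = 6 from rfl, show tout 3 4 = [] from rfl]
  | succ n =>
    simpa [List.replicate_succ, dAcc_cons,
      show tδ 1 4 = 5 from rfl, show tout 1 4 = [4] from rfl,
      List.cons_prefix_cons] using accB5 n

lemma accB (m n : ℕ) :
    dAcc (List.replicate m 0 ++ (List.replicate n 1 ++ [3])) 4 (List.replicate n 4) = 1 := by
  induction m with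
  | zero => simpa using accB4 n
  | succ m ih =>
    simpa [List.replicate_succ, dAcc_cons,
      show tδ 0 4 = 4 from rfl, show tout 0 4 = [] from rfl] using ih

lemma fin4cases (b : Fin 4) : b = 0 ∨ b = 1 ∨ b = 2 ∨ b = 3 := by revert b; decide

lemma tδ_pre (a : Fin 4) (q : Fin 9) (hq : q = 3 ∨ q = 6) : tδ a q = 8 := by
  revert a q; decide

lemma sndPre (v : List (Fin 4)) (w : List (Fin 5)) (q : Fin 9) (hq : q = 3 ∨ q = 6)
    (h : dAcc v q w ≠ 0) : v = [] ∧ w = [] := by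
  cases v with
  | nil =>
    rw [dAcc_nil] at h
    rcases hq with rfl | rfl <;> simp_all
  | cons a v =>
    exfalso
    rw [dAcc_cons] at h
    have hδ : tδ a q = 8 := tδ_pre a q hq
    rw [hδ, dAcc8] at h
    simp at h

lemma sndA2 (v : List (Fin 4)) (w : List (Fin 5)) (h : dAcc v 2 w ≠ 0) :
    ∃ n, v = List.replicate n 1 ++ [2] ∧ w = [] := by
  induction v generalizing w with
  | nil => rw [dAcc_nil] at h; simp at h
  | cons a v ih =>
    rw [dAcc_cons] at h
    rcases fin4cases a with rfl | rfl | rfl | rfl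
    · rw [show tδ 0 2 = 8 from rfl, dAcc8] at h; simp at h
    · rw [show tδ 1 2 = 2 from rfl, show tout 1 2 = [] from rfl] at h
      simp only [List.nil_prefix, if_pos, List.length_nil, List.drop_zero] at h
      obtain ⟨n, hv, hw⟩ := ih w h
      exact ⟨n + 1, by simp [List.replicate_succ, hv], hw⟩
    · rw [show tδ 2 2 = 3 from rfl, show tout 2 2 = [] from rfl] at h
      simp only [List.nil_prefix, if_pos, List.length_nil, List.drop_zero] at h
      obtain ⟨hv, hw⟩ := sndPre v w 3 (Or.inl rfl) h
      exact ⟨0, by simp [hv], hw⟩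
    · rw [show tδ 3 2 = 8 from rfl, dAcc8] at h; simp at h

lemma sndA1 (v : List (Fin 4)) (w : List (Fin 5)) (h : dAcc v 1 w ≠ 0) :
    ∃ m n, v = List.replicate m 0 ++ (List.replicate n 1 ++ [2]) ∧ w = List.replicate m 4 := by
  induction v generalizing w with
  | nil => rw [dAcc_nil] at h; simp at h
  | cons a v ih =>
    rw [dAcc_cons] at h
    rcases fin4cases a with rfl | rfl | rfl | rfl
    · rw [show tδ 0 1 = 1 from rfl, show tout 0 1 = [4] from rfl] at h
      split_ifs at h with hp
      · obtain ⟨t, rfl⟩ := hp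
        simp only [List.length_cons, List.length_nil, List.singleton_append,
        List.drop_succ_cons, List.drop_zero] at h
        obtain ⟨m, n, hv, hw⟩ := ih t h
        exact ⟨m + 1, n, by simp [List.replicate_succ, hv], by simp [List.replicate_succ, hw]⟩
      · exact absurd rfl h
    · rw [show tδ 1 1 = 2 from rfl, show tout 1 1 = [] from rfl] at h
      simp only [List.nil_prefix, if_pos, List.length_nil, List.drop_zero] at h
      obtain ⟨n, hv, hw⟩ := sndA2 v w h
      exact ⟨0, n + 1, by simp [List.replicate_succ, hv], by simpa using hw⟩
    · rw [show tδ 2 1 = 3 from rfl, show tout 2 1 = [] from rfl] at h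
      simp only [List.nil_prefix, if_pos, List.length_nil, List.drop_zero] at h
      obtain ⟨hv, hw⟩ := sndPre v w 3 (Or.inl rfl) h
      exact ⟨0, 0, by simp [hv], by simpa using hw⟩
    · rw [show tδ 3 1 = 8 from rfl, dAcc8] at h; simp at h

lemma sndB5 (v : List (Fin 4)) (w : List (Fin 5)) (h : dAcc v 5 w ≠ 0) :
    ∃ n, v = List.replicate n 1 ++ [3] ∧ w = List.replicate n 4 := by
  induction v generalizing w with
  | nil => rw [dAcc_nil] at h; simp at h
  | cons a v ih =>
    rw [dAcc_cons] at h
    rcases fin4cases a with rfl | rfl | rfl | rfl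
    · rw [show tδ 0 5 = 8 from rfl, dAcc8] at h; simp at h
    · rw [show tδ 1 5 = 5 from rfl, show tout 1 5 = [4] from rfl] at h
      split_ifs at h with hp
      · obtain ⟨t, rfl⟩ := hp
        simp only [List.length_cons, List.length_nil, List.singleton_append,
        List.drop_succ_cons, List.drop_zero] at h
        obtain ⟨n, hv, hw⟩ := ih t h
        exact ⟨n + 1, by simp [List.replicate_succ, hv], by simp [List.replicate_succ, hw]⟩
      · exact absurd rfl h
    · rw [show tδ 2 5 = 8 from rfl, dAcc8] at h; simp at h
    · rw [show tδ 3 5 = 6 from rfl, show tout 3 5 = [] from rfl] at h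
      simp only [List.nil_prefix, if_pos, List.length_nil, List.drop_zero] at h
      obtain ⟨hv, hw⟩ := sndPre v w 6 (Or.inr rfl) h
      exact ⟨0, by simp [hv], by simpa using hw⟩

lemma sndB4 (v : List (Fin 4)) (w : List (Fin 5)) (h : dAcc v 4 w ≠ 0) :
    ∃ m n, v = List.replicate m 0 ++ (List.replicate n 1 ++ [3]) ∧ w = List.replicate n 4 := by
  induction v generalizing w with
  | nil => rw [dAcc_nil] at h; simp at h
  | cons a v ih =>
    rw [dAcc_cons] at h
    rcases fin4cases a with rfl | rfl | rfl | rfl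
    · rw [show tδ 0 4 = 4 from rfl, show tout 0 4 = [] from rfl] at h
      simp only [List.nil_prefix, if_pos, List.length_nil, List.drop_zero] at h
      obtain ⟨m, n, hv, hw⟩ := ih w h
      exact ⟨m + 1, n, by simp [List.replicate_succ, hv], hw⟩
    · rw [show tδ 1 4 = 5 from rfl, show tout 1 4 = [4] from rfl] at h
      split_ifs at h with hp
      · obtain ⟨t, rfl⟩ := hp
        simp only [List.length_cons, List.length_nil, List.singleton_append,
        List.drop_succ_cons, List.drop_zero] at h
        obtain ⟨n, hv, hw⟩ := sndB5 v t h
        exact ⟨0, n + 1, by simp [List.replicate_succ, hv], by simp [List.replicate_succ, hw]⟩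
      · exact absurd rfl h
    · rw [show tδ 2 4 = 8 from rfl, dAcc8] at h; simp at h
    · rw [show tδ 3 4 = 6 from rfl, show tout 3 4 = [] from rfl] at h
      simp only [List.nil_prefix, if_pos, List.length_nil, List.drop_zero] at h
      obtain ⟨hv, hw⟩ := sndPre v w 6 (Or.inr rfl) h
      exact ⟨0, 0, by simp [hv], by simpa using hw⟩

end R4proof

/-- For every `α` with `0 < α < 1/2` there is a probabilistic finite state
transducer computing `R₄` with isolated cutpoint `α` (so the cutpoint can be
taken arbitrarily close to `1/2`). -/
theorem pfst_computes_R₄_cutpoint (α : ℝ) (h0 : 0 < α) (h1 : α < 1/2) :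
    ∃ (n : ℕ) (T : PFST (Fin n) (Fin 4) (Fin 5)), T.ComputesCutpoint R₄ α := by
  refine ⟨9, R4proof.T4, min α (1/2 - α), lt_min h0 (by linarith), ?_⟩
  intro v w
  have hεα : min α (1/2 - α) ≤ α := min_le_left _ _
  have hεh : min α (1/2 - α) ≤ 1/2 - α := min_le_right _ _
  constructor
  · rintro ⟨m, n, l, a, ha, ha2, ha3, hv, hw⟩
    simp only at hv hw
    rw [R4proof.prob_eq]
    rcases ha with rfl | rfl
    · have hl : l = m := ha2 rfl
      subst hl; subst hv; subst hw
      have h1' := R4proof.accA l n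
      have h2' := R4proof.dAcc_nonneg (List.replicate l 0 ++ (List.replicate n 1 ++ [(2:Fin 4)]))
        4 (List.replicate l 4)
      rw [← List.append_assoc] at h1' h2'
      rw [h1']
      linarith
    · have hl : l = n := ha3 rfl
      subst hl; subst hv; subst hw
      have h1' := R4proof.accB m l
      have h2' := R4proof.dAcc_nonneg (List.replicate m 0 ++ (List.replicate l 1 ++ [(3:Fin 4)]))
        1 (List.replicate l 4)
      rw [← List.append_assoc] at h1' h2'
      rw [h1']
      linarith
  · intro hnot
    rw [R4proof.prob_eq]
    have hA : R4proof.dAcc v 1 w = 0 := by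
      by_contra h
      obtain ⟨m, n, hv, hw⟩ := R4proof.sndA1 v w h
      exact hnot ⟨m, n, m, 2, Or.inl rfl, fun _ => rfl,
        fun h' => absurd h' (by decide), by rw [hv, List.append_assoc], hw⟩
    have hB : R4proof.dAcc v 4 w = 0 := by
      by_contra h
      obtain ⟨m, n, hv, hw⟩ := R4proof.sndB4 v w h
      exact hnot ⟨m, n, n, 3, Or.inr rfl, fun h' => absurd h' (by decide),
        fun _ => rfl, by rw [hv, List.append_assoc], hw⟩
    rw [hA, hB]
    linarith
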